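/- arXiv:2403.03281 — 2 statements merged into one kernel-verified Lean document; each statement's English description precedes it below -/
import Mathlib

section
/- For a joint probability distribution P over variables (Y, F) where F = (F_1,...,F_M), if P is marginal dominant (i.e., every marginal dominates the joint pointwise), then the expectation of the KL divergence KL(P(Y|F) || P(Y|F^{-j})) is bounded below by the negative conditional entropy -H(F_j | F^{-j}), where F^{-j} denotes F with the j-th component removed. -/
open scoped Classical
noncomputable section

/-- A joint distribution `P` over finitely many finite variables is *marginal dominant*
if for every subset `S` of the variables, the marginal obtained by summing out the
variables in `S` dominates the joint pointwise. -/
def MarginalDominant {ι : Type*} [Fintype ι] {X : ι → Type*} [∀ i, Fintype (X i)]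
    (P : (∀ i, X i) → ℝ) : Prop :=
  ∀ (S : Finset ι) (x : ∀ i, X i),
    P x ≤ ∑ z ∈ Finset.univ.filter (fun z : ∀ i, X i => ∀ i ∉ S, z i = x i), P z

universe u

/-- The family of variables consisting of the target `Y` together with the modalities
`F 0, …, F (M-1)`. -/
def OptFam {M : ℕ} (Y : Type u) (F : Fin M → Type u) : Option (Fin M) → Type _ :=
  fun o => Option.elim o Y F

instance {M : ℕ} (Y : Type u) (F : Fin M → Type u) [Fintype Y] [∀ i, Fintype (F i)] :
    ∀ o, Fintype (OptFam Y F o)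
  | none => (inferInstance : Fintype Y)
  | some i => (inferInstance : Fintype (F i))

lemma mul_log_div_ge {p q : ℝ} (hp : 0 < p) (hq : 0 < q) :
    p * Real.log (p / q) ≥ p - q := by
  have h := Real.log_le_sub_one_of_pos (x := q / p) (by positivity)
  have hlog : Real.log (p / q) = - Real.log (q / p) := by
    rw [← Real.log_inv]; congr 1; field_simp
  rw [hlog]
  have : Real.log (q / p) ≤ q / p - 1 := h
  nlinarith [mul_le_mul_of_nonneg_left this hp.le, mul_div_cancel₀ q hp.ne']

/-- If the joint distribution `P` over `(Y, F_1, …, F_M)` is marginal dominant, the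
expectation of the credibility `C^j = KL(P(Y|F) ‖ P(Y|F^{-j}))` is lower bounded by the
negative conditional entropy `-H(F_j | F^{-j})`. -/
theorem expected_credibility_lower_bound
    {M : ℕ} {Y : Type u} [Fintype Y] {F : Fin M → Type u} [∀ i, Fintype (F i)]
    (P : Y → (∀ i, F i) → ℝ)
    (hpos : ∀ y f, 0 < P y f)
    (hsum : ∑ y : Y, ∑ f : ∀ i, F i, P y f = 1)
    (hMD : MarginalDominant (X := OptFam Y F)
      (fun x => P (x none) (fun i => x (some i))))
    (j : Fin M) :
    -- E[C^j] :
    ∑ f : ∀ i, F i,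
        (∑ y : Y, P y f) *
          (∑ y : Y,
            ((P y f) / (∑ y' : Y, P y' f)) *
              Real.log (((P y f) / (∑ y' : Y, P y' f)) /
                ((∑ v : F j, P y (Function.update f j v)) /
                  (∑ y' : Y, ∑ v : F j, P y' (Function.update f j v)))))
      ≥
      -- -H(F_j | F^{-j}) = E[log (P(F) / P(F^{-j}))] :
      ∑ f : ∀ i, F i,
        (∑ y : Y, P y f) *
          Real.log ((∑ y : Y, P y f) /
            (∑ y : Y, ∑ v : F j, P y (Function.update f j v))) := by
  classical
  have hY : Nonempty Y := by
    by_contra h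
    rw [not_nonempty_iff] at h
    simp at hsum
  set Q : (∀ i, F i) → ℝ := fun f => ∑ y : Y, P y f with hQdef
  set A : Y → (∀ i, F i) → ℝ := fun y f => ∑ v : F j, P y (Function.update f j v) with hAdef
  set B : (∀ i, F i) → ℝ := fun f => ∑ y : Y, A y f with hBdef
  have hQpos : ∀ f, 0 < Q f := fun f =>
    Finset.sum_pos (fun y _ => hpos y f) Finset.univ_nonempty
  have hApos : ∀ y f, 0 < A y f := fun y f =>
    Finset.sum_pos (fun v _ => hpos y _) ⟨f j, Finset.mem_univ _⟩
  have hBpos : ∀ f, 0 < B f := fun f =>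
    Finset.sum_pos (fun y _ => hApos y f) Finset.univ_nonempty
  have hPA : ∀ y f, P y f ≤ A y f := by
    intro y f
    have := Finset.single_le_sum (f := fun v : F j => P y (Function.update f j v))
      (fun v _ => (hpos y _).le) (Finset.mem_univ (f j))
    simpa [Function.update_eq_self] using this
  have hQB : ∀ f, Q f ≤ B f := fun f =>
    Finset.sum_le_sum (fun y _ => hPA y f)
  -- rewrite LHS
  have key : ∀ f, Q f * (∑ y : Y, (P y f / Q f) *
        Real.log ((P y f / Q f) / (A y f / B f)))
      = ∑ y : Y, P y f * Real.log (P y f / (Q f * A y f / B f)) := by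
    intro f
    rw [Finset.mul_sum]
    refine Finset.sum_congr rfl fun y _ => ?_
    have h1 : (P y f / Q f) / (A y f / B f) = P y f / (Q f * A y f / B f) := by
      field_simp
    rw [h1, ← mul_assoc, mul_div_cancel₀ _ (hQpos f).ne']
  have hLHSeq : (∑ f : ∀ i, F i, Q f * (∑ y : Y, (P y f / Q f) *
        Real.log ((P y f / Q f) / (A y f / B f))))
      = ∑ f : ∀ i, F i, ∑ y : Y, P y f * Real.log (P y f / (Q f * A y f / B f)) :=
    Finset.sum_congr rfl fun f _ => key f
  have hsum' : ∑ f : ∀ i, F i, ∑ y : Y, P y f = 1 := by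
    rw [Finset.sum_comm]; exact hsum
  have hqsum : ∑ f : ∀ i, F i, ∑ y : Y, Q f * A y f / B f = 1 := by
    have : ∀ f, ∑ y : Y, Q f * A y f / B f = Q f := by
      intro f
      have : ∑ y : Y, Q f * A y f / B f = (Q f / B f) * ∑ y : Y, A y f := by
        rw [Finset.mul_sum]; refine Finset.sum_congr rfl fun y _ => ?_; ring
      rw [this]
      rw [show (∑ y : Y, A y f) = B f from rfl]
      exact div_mul_cancel₀ _ (hBpos f).ne'
    simp_rw [this]
    exact hsum'
  have hLHS : (0:ℝ) ≤ ∑ f : ∀ i, F i, ∑ y : Y, P y f * Real.log (P y f / (Q f * A y f / B f)) := by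
    have h1 : ∑ f : ∀ i, F i, ∑ y : Y, (P y f - Q f * A y f / B f)
        ≤ ∑ f : ∀ i, F i, ∑ y : Y, P y f * Real.log (P y f / (Q f * A y f / B f)) := by
      refine Finset.sum_le_sum fun f _ => Finset.sum_le_sum fun y _ => ?_
      exact mul_log_div_ge (hpos y f) (div_pos (mul_pos (hQpos f) (hApos y f)) (hBpos f))
    have h2 : ∑ f : ∀ i, F i, ∑ y : Y, (P y f - Q f * A y f / B f) = 0 := by
      simp_rw [Finset.sum_sub_distrib]
      rw [hsum', hqsum]; ring
    linarith
  have hRHS : (∑ f : ∀ i, F i, Q f * Real.log (Q f / B f)) ≤ 0 := by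
    refine Finset.sum_nonpos fun f _ => ?_
    apply mul_nonpos_of_nonneg_of_nonpos (hQpos f).le
    apply Real.log_nonpos (div_pos (hQpos f) (hBpos f)).le
    rw [div_le_one (hBpos f)]
    exact hQB f
  calc (∑ f : ∀ i, F i, Q f * Real.log (Q f / B f)) ≤ 0 := hRHS
    _ ≤ _ := by rw [hLHSeq]; exact hLHS
end
end

section
/- In a smooth and decomposable probabilistic circuit, marginalizing a variable X_j commutes with the circuit structure: the marginal of the distribution computed at any node equals the distribution computed by the circuit in which every leaf with scope {j} is replaced by the constant function equal to its total mass (which is 1). -/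
open scoped Classical
noncomputable section

universe u

/-- A probabilistic circuit over variables indexed by `ι` with domains `X i`:
leaves compute univariate densities, sum nodes compute weighted sums of their children,
and product nodes compute products of their children. -/
inductive PC (ι : Type) (X : ι → Type u) : Type (u + 1) where
  | leaf (i : ι) (ψ : X i → ℝ) : PC ι X
  | sum (weights : List ℝ) (children : List (PC ι X)) : PC ι X
  | prod (children : List (PC ι X)) : PC ι X

namespace PC

variable {ι : Type} {X : ι → Type u}

/-- The scope (set of variables) of a circuit node. -/
def scope [DecidableEq ι] : PC ι X → Finset ι
  | .leaf i _ => {i}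
  | .sum _ cs => (cs.attach.map (fun c => scope c.1)).foldr (· ∪ ·) ∅
  | .prod cs => (cs.attach.map (fun c => scope c.1)).foldr (· ∪ ·) ∅
decreasing_by
  all_goals (have := List.sizeOf_lt_of_mem c.2; simp at *; omega)

/-- The (unnormalized) density computed by a circuit node. -/
def eval : PC ι X → (∀ i, X i) → ℝ
  | .leaf i ψ, x => ψ (x i)
  | .sum ws cs, x =>
      (List.zipWith (fun w v => w * v) ws (cs.attach.map (fun c => eval c.1 x))).sum
  | .prod cs, x => (cs.attach.map (fun c => eval c.1 x)).prod
decreasing_by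
  all_goals (have := List.sizeOf_lt_of_mem c.2; simp at *; omega)

/-- Smoothness: all children of every sum node have identical scope. -/
inductive Smooth [DecidableEq ι] : PC ι X → Prop
  | leaf (i : ι) (ψ : X i → ℝ) : Smooth (.leaf i ψ)
  | sum (ws : List ℝ) (cs : List (PC ι X))
      (h : ∀ c ∈ cs, Smooth c)
      (hsc : ∀ c ∈ cs, ∀ d ∈ cs, scope c = scope d) : Smooth (.sum ws cs)
  | prod (cs : List (PC ι X)) (h : ∀ c ∈ cs, Smooth c) : Smooth (.prod cs)

/-- Decomposability: children of every product node have pairwise disjoint scopes. -/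
inductive Decomposable [DecidableEq ι] : PC ι X → Prop
  | leaf (i : ι) (ψ : X i → ℝ) : Decomposable (.leaf i ψ)
  | sum (ws : List ℝ) (cs : List (PC ι X))
      (h : ∀ c ∈ cs, Decomposable c) : Decomposable (.sum ws cs)
  | prod (cs : List (PC ι X))
      (h : ∀ c ∈ cs, Decomposable c)
      (hdisj : List.Pairwise (fun c d => Disjoint (scope c) (scope d)) cs) :
      Decomposable (.prod cs)

/-- Validity: leaves are probability mass functions with densities bounded above by `1`,
and sum nodes are convex combinations (nonnegative weights summing to `1`). -/
inductive Valid [∀ i, Fintype (X i)] : PC ι X → Prop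
  | leaf (i : ι) (ψ : X i → ℝ)
      (hnonneg : ∀ v, 0 ≤ ψ v) (hbdd : ∀ v, ψ v ≤ 1)
      (hsum : ∑ v : X i, ψ v = 1) : Valid (.leaf i ψ)
  | sum (ws : List ℝ) (cs : List (PC ι X))
      (h : ∀ c ∈ cs, Valid c)
      (hw : ∀ w ∈ ws, 0 ≤ w)
      (hw1 : ws.sum = 1)
      (hlen : ws.length = cs.length) : Valid (.sum ws cs)
  | prod (cs : List (PC ι X)) (h : ∀ c ∈ cs, Valid c) : Valid (.prod cs)


/-- Replace every leaf with scope `{j}` by the constant function equal to its total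
mass. -/
def margLeaf [DecidableEq ι] [∀ i, Fintype (X i)] (j : ι) : PC ι X → PC ι X
  | .leaf i ψ => if i = j then .leaf i (fun _ => ∑ v : X i, ψ v) else .leaf i ψ
  | .sum ws cs => .sum ws (cs.attach.map (fun c => margLeaf j c.1))
  | .prod cs => .prod (cs.attach.map (fun c => margLeaf j c.1))
decreasing_by
  all_goals (have := List.sizeOf_lt_of_mem c.2; simp at *; omega)

end PC

/-!
Induction on the circuit. Summing over `X_j` is linear, so it passes through a sum node to its
children, all of which contain `j` by smoothness. At a product node decomposability leaves exactly
one child whose scope contains `j`; the remaining factors depend neither on `X_j` nor on the leaves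
that `margLeaf j` rewrites, so the sum over `X_j` only acts on that one child.
-/

theorem Finset.sum_list_sum_zipWith_mul {α β R : Type*} [NonUnitalNonAssocSemiring R]
    (s : Finset β) (ws : List R) (l : List α) (F : β → α → R) :
    ∑ v ∈ s, (List.zipWith (fun w r => w * r) ws (l.map (F v))).sum
      = (List.zipWith (fun w r => w * r) ws (l.map fun a => ∑ v ∈ s, F v a)).sum := by
  induction ws generalizing l with
  | nil => simp
  | cons w ws ih =>
    cases l with
    | nil => simp
    | cons a l =>
      simp only [List.map_cons, List.zipWith_cons_cons, List.sum_cons]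
      rw [Finset.sum_add_distrib, ← Finset.mul_sum, ih]

/-- `dep` marks the factors that may depend on `v`; at most one of them does. -/
theorem Finset.sum_list_prod_map_of_pairwise {α β R : Type*} [CommSemiring R]
    (s : Finset β) (l : List α) (dep : α → Prop) (F : β → α → R) (G : α → R)
    (hpair : l.Pairwise fun a b => ¬(dep a ∧ dep b)) (hex : ∃ a ∈ l, dep a)
    (hdep : ∀ a ∈ l, dep a → ∑ v ∈ s, F v a = G a)
    (hindep : ∀ a ∈ l, ¬dep a → ∀ v ∈ s, F v a = G a) :
    ∑ v ∈ s, (l.map (F v)).prod = (l.map G).prod := by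
  induction l with
  | nil => simp at hex
  | cons a l ih =>
    simp only [List.map_cons, List.prod_cons]
    rw [List.pairwise_cons] at hpair
    simp only [List.mem_cons, forall_eq_or_imp] at hdep hindep
    by_cases ha : dep a
    · have hrest : ∀ v ∈ s, (l.map (F v)).prod = (l.map G).prod := fun v hv =>
        congrArg _ <| List.map_congr_left fun b hb =>
          hindep.2 b hb (fun hdb => hpair.1 b hb ⟨ha, hdb⟩) v hv
      rw [Finset.sum_congr rfl fun v hv => by rw [hrest v hv], ← Finset.sum_mul, hdep.1 ha]
    · have hex' : ∃ b ∈ l, dep b := by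
        obtain ⟨b, hb, hdb⟩ := hex
        rcases List.mem_cons.mp hb with rfl | hb
        · exact absurd hdb ha
        · exact ⟨b, hb, hdb⟩
      rw [Finset.sum_congr rfl fun v hv => by rw [hindep.1 ha v hv], ← Finset.mul_sum,
        ih hpair.2 hex' hdep.2 hindep.2]

theorem List.mem_foldr_union_map {α β : Type*} [DecidableEq β] (l : List α) (f : α → Finset β)
    (b : β) : b ∈ (l.map f).foldr (· ∪ ·) ∅ ↔ ∃ a ∈ l, b ∈ f a := by
  induction l with
  | nil => simp
  | cons a l ih => simp [ih]

namespace PC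

variable {ι : Type} {X : ι → Type u}

@[induction_eliminator]
theorem induction_on {motive : PC ι X → Prop} (c : PC ι X)
    (leaf : ∀ i ψ, motive (.leaf i ψ))
    (sum : ∀ ws cs, (∀ c ∈ cs, motive c) → motive (.sum ws cs))
    (prod : ∀ cs, (∀ c ∈ cs, motive c) → motive (.prod cs)) : motive c :=
  c.rec (motive_2 := fun cs => ∀ c ∈ cs, motive c) leaf sum prod (by simp)
    fun _ _ hc hcs => List.forall_mem_cons.2 ⟨hc, hcs⟩

theorem eval_leaf (i : ι) (ψ : X i → ℝ) (x : ∀ i, X i) : eval (.leaf i ψ) x = ψ (x i) := by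
  rw [eval]

theorem eval_sum (ws : List ℝ) (cs : List (PC ι X)) (x : ∀ i, X i) :
    eval (.sum ws cs) x = (List.zipWith (fun w v => w * v) ws (cs.map (eval · x))).sum := by
  rw [eval, List.attach_map_val (f := (eval · x))]

theorem eval_prod (cs : List (PC ι X)) (x : ∀ i, X i) :
    eval (.prod cs) x = (cs.map (eval · x)).prod := by
  rw [eval, List.attach_map_val (f := (eval · x))]

section Scope

variable [DecidableEq ι]

theorem scope_leaf (i : ι) (ψ : X i → ℝ) : scope (.leaf i ψ) = {i} := by
  rw [scope]

theorem mem_scope_sum {ws : List ℝ} {cs : List (PC ι X)} {i : ι} :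
    i ∈ scope (.sum ws cs) ↔ ∃ c ∈ cs, i ∈ c.scope := by
  rw [scope, List.attach_map_val, List.mem_foldr_union_map]

theorem mem_scope_prod {cs : List (PC ι X)} {i : ι} :
    i ∈ scope (.prod cs) ↔ ∃ c ∈ cs, i ∈ c.scope := by
  rw [scope, List.attach_map_val, List.mem_foldr_union_map]

theorem eval_congr (c : PC ι X) {x y : ∀ i, X i}
    (h : ∀ i ∈ c.scope, x i = y i) : c.eval x = c.eval y := by
  induction c with
  | leaf i ψ => rw [eval_leaf, eval_leaf, h i (by simp [scope_leaf])]
  | sum ws cs ih =>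
    rw [eval_sum, eval_sum, List.map_congr_left fun c hc =>
      ih c hc fun i hi => h i (mem_scope_sum.2 ⟨c, hc, hi⟩)]
  | prod cs ih =>
    rw [eval_prod, eval_prod, List.map_congr_left fun c hc =>
      ih c hc fun i hi => h i (mem_scope_prod.2 ⟨c, hc, hi⟩)]

theorem eval_update_of_notMem_scope {c : PC ι X} {j : ι} (hj : j ∉ c.scope)
    (x : ∀ i, X i) (v : X j) : c.eval (Function.update x j v) = c.eval x :=
  c.eval_congr fun _ hi => Function.update_of_ne (ne_of_mem_of_not_mem hi hj) _ _

end Scope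

section MargLeaf

variable [DecidableEq ι] [∀ i, Fintype (X i)]

theorem margLeaf_sum (j : ι) (ws : List ℝ) (cs : List (PC ι X)) :
    margLeaf j (.sum ws cs) = .sum ws (cs.map (margLeaf j)) := by
  rw [margLeaf, List.attach_map_val]

theorem margLeaf_prod (j : ι) (cs : List (PC ι X)) :
    margLeaf j (.prod cs) = .prod (cs.map (margLeaf j)) := by
  rw [margLeaf, List.attach_map_val]

theorem eval_margLeaf_of_notMem_scope {c : PC ι X} {j : ι} (hj : j ∉ c.scope)
    (x : ∀ i, X i) : (c.margLeaf j).eval x = c.eval x := by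
  induction c with
  | leaf i ψ =>
    have hij : i ≠ j := fun h => hj (by simp [scope_leaf, h])
    rw [margLeaf, if_neg hij]
  | sum ws cs ih =>
    rw [margLeaf_sum, eval_sum, eval_sum, List.map_map]
    congr 2
    exact List.map_congr_left fun c hc => ih c hc fun h => hj (mem_scope_sum.2 ⟨c, hc, h⟩)
  | prod cs ih =>
    rw [margLeaf_prod, eval_prod, eval_prod, List.map_map]
    congr 1
    exact List.map_congr_left fun c hc => ih c hc fun h => hj (mem_scope_prod.2 ⟨c, hc, h⟩)

end MargLeaf

end PC

theorem PC.marginalize_commutes_general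
    {ι : Type} [DecidableEq ι] {X : ι → Type u}
    [∀ i, Fintype (X i)]
    (c : PC ι X) (hs : c.Smooth) (hd : c.Decomposable)
    (j : ι) (hj : j ∈ c.scope) (x : ∀ i, X i) :
    ∑ v : X j, c.eval (Function.update x j v) = (c.margLeaf j).eval x := by
  induction c with
  | leaf i ψ =>
    obtain rfl : j = i := by simpa [scope_leaf] using hj
    rw [margLeaf, if_pos rfl, eval_leaf]
    simp only [eval_leaf, Function.update_self]
  | sum ws cs ih =>
    cases hs with | sum _ _ hs hsc =>
    cases hd with | sum _ _ hd =>
    obtain ⟨c₀, hc₀, hj₀⟩ := mem_scope_sum.1 hj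
    simp only [margLeaf_sum, eval_sum, List.map_map, Finset.sum_list_sum_zipWith_mul]
    congr 2
    refine List.map_congr_left fun c hc => ?_
    exact ih c hc (hs c hc) (hd c hc) (hsc c hc c₀ hc₀ ▸ hj₀)
  | prod cs ih =>
    cases hs with | prod _ hs =>
    cases hd with | prod _ hd hdisj =>
    simp only [margLeaf_prod, eval_prod, List.map_map]
    refine Finset.sum_list_prod_map_of_pairwise _ cs (j ∈ scope ·) _ _ ?_ (mem_scope_prod.1 hj)
      (fun c hc hjc => ih c hc (hs c hc) (hd c hc) hjc) fun c _ hjc v _ => ?_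
    · exact hdisj.imp fun hcd ⟨hjc, hjd⟩ => Finset.disjoint_left.1 hcd hjc hjd
    · exact (eval_update_of_notMem_scope hjc x v).trans (eval_margLeaf_of_notMem_scope hjc x).symm

/-- In a smooth and decomposable probabilistic circuit, marginalizing out a variable
`X_j` (in the scope of the circuit) commutes with the circuit structure: the marginal of
the distribution computed at a node equals the distribution computed by the circuit in
which every leaf with scope `{j}` is replaced by the constant function equal to its total
mass (which is `1` for normalized leaves). -/
theorem PC.marginalize_commutes
    {ι : Type} [Fintype ι] [DecidableEq ι] {X : ι → Type u}
    [∀ i, Fintype (X i)]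
    (c : PC ι X) (hs : c.Smooth) (hd : c.Decomposable)
    (j : ι) (hj : j ∈ c.scope) (x : ∀ i, X i) :
    ∑ v : X j, c.eval (Function.update x j v) = (c.margLeaf j).eval x :=
  PC.marginalize_commutes_general c hs hd j hj x
end
end
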